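/- Let (x_n)_{n∈I} be a frame, (z_n)_{n∈I} a dual frame, and E = {1,...,k} satisfying the MRC. Suppose the iterative procedure (as in Theorem on the non-canonical case) is well defined through step k. Then the k×k matrix A_{X,Z,E} with entries (A)_{mi} = ⟨z_i, x_m⟩ − δ_{mi} is invertible, and the sequence v_n = z_n − Σ_{i=1}^k α_{ni} z_i with (α_{n1},...,α_{nk})^T = A_{X,Z,E}⁻¹(⟨z_n,x_1⟩,...,⟨z_n,x_k⟩)^T is a dual frame of (x_n)_{n∈E^c}. -/

import Mathlib

noncomputable section

variable {H : Type*} [NormedAddCommGroup H] [InnerProductSpace ℂ H] [CompleteSpace H]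

/-- `(x n)_{n ∈ I}` is a frame for `H` with frame bounds `A`, `B`. -/
def IsFrameOn (x : ℕ → H) (I : Set ℕ) (A B : ℝ) : Prop :=
  0 < A ∧ 0 < B ∧ ∀ h : H,
    Summable (fun n : I => ‖(inner ℂ (x n) h : ℂ)‖ ^ 2) ∧
    A * ‖h‖ ^ 2 ≤ ∑' n : I, ‖(inner ℂ (x n) h : ℂ)‖ ^ 2 ∧
    ∑' n : I, ‖(inner ℂ (x n) h : ℂ)‖ ^ 2 ≤ B * ‖h‖ ^ 2

/-- `(z n)_{n ∈ I}` is a dual frame of `(x n)_{n ∈ I}`. -/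
def IsDualFrameOn (z x : ℕ → H) (I : Set ℕ) : Prop :=
  (∃ A B : ℝ, IsFrameOn z I A B) ∧
  ∀ h : H, HasSum (fun n : I => (inner ℂ (x n) h : ℂ) • z n) h

/-!
A kernel vector `c` of `A_{X,Z,E}` gives `u = ∑ c i • z i` with `u = ∑_{m ≤ k} ⟪x m, u⟫ • z m`.
Each step of the iterative procedure is a rank-one update that keeps such a representation of `u`
while dropping one index, so after `k` steps `u = 0`, whence `c = 0`.

With the analysis operator `X` of `x 1, …, x k` and the synthesis operator `Z` of `z 1, …, z k`,
`A_{X,Z,E} = X Z - 1` and the new sequence is `n ↦ T (z n)` for `T = 1 - Z A⁻¹ X`, a left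
inverse of `1 - Z X` (a Woodbury-type identity). Applying `T` to
`∑_{n ∉ E} ⟪x n, h⟫ • z n = h - Z X h` gives the reconstruction formula. The upper frame bound
of `(T (z n))` holds because `T` is bounded, the lower one follows from the reconstruction
formula by Cauchy–Schwarz.
-/

open Finset
open scoped InnerProductSpace Matrix

lemma sum_Icc_one_eq_sum_fin {M : Type*} [AddCommMonoid M] (k : ℕ) (f : ℕ → M) :
    ∑ m ∈ Icc 1 k, f m = ∑ i : Fin k, f (i + 1) := by
  rw [Fin.sum_univ_eq_sum_range (fun i => f (i + 1)), ← Ico_add_one_right_eq_Icc,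
    sum_Ico_eq_sum_range, add_tsub_cancel_right]
  simp only [add_comm]

section Bessel

variable {E F : Type*} [NormedAddCommGroup E] [InnerProductSpace ℂ E]
  [NormedAddCommGroup F] [InnerProductSpace ℂ F]

def IsBesselOn (x : ℕ → E) (I : Set ℕ) (B : ℝ) : Prop :=
  ∀ h : E, Summable (fun n : I => ‖⟪x n, h⟫_ℂ‖ ^ 2) ∧ ∑' n : I, ‖⟪x n, h⟫_ℂ‖ ^ 2 ≤ B * ‖h‖ ^ 2

lemma IsFrameOn.isBesselOn {x : ℕ → E} {I : Set ℕ} {A B : ℝ} (hx : IsFrameOn x I A B) :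
    IsBesselOn x I B :=
  fun h => ⟨(hx.2.2 h).1, (hx.2.2 h).2.2⟩

lemma IsBesselOn.mono {x : ℕ → E} {I J : Set ℕ} {B : ℝ} (hx : IsBesselOn x I B) (hJI : J ⊆ I) :
    IsBesselOn x J B := by
  intro h
  obtain ⟨hs, hle⟩ := hx h
  have hinj : Function.Injective (Set.inclusion hJI) := Set.inclusion_injective hJI
  have hsJ := hs.comp_injective hinj
  have hleJ := tsum_comp_le_tsum_of_inj hs (fun _ => by positivity) hinj
  exact ⟨hsJ, hleJ.trans hle⟩

lemma IsBesselOn.map [CompleteSpace E] [CompleteSpace F] {z : ℕ → E} {I : Set ℕ} {B : ℝ}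
    (hz : IsBesselOn z I B) (hB : 0 ≤ B) (T : E →L[ℂ] F) :
    IsBesselOn (fun n => T (z n)) I (B * ‖T‖ ^ 2) := by
  intro h
  obtain ⟨hs, hle⟩ := hz (T.adjoint h)
  simp only [← ContinuousLinearMap.adjoint_inner_right]
  refine ⟨hs, hle.trans ?_⟩
  have hT : ‖T.adjoint h‖ ≤ ‖T‖ * ‖h‖ := by
    simpa only [LinearIsometryEquiv.norm_map] using T.adjoint.le_opNorm h
  calc B * ‖T.adjoint h‖ ^ 2 ≤ B * (‖T‖ * ‖h‖) ^ 2 := by gcongr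
    _ = B * ‖T‖ ^ 2 * ‖h‖ ^ 2 := by ring

lemma IsBesselOn.inv_mul_sq_norm_le_tsum {x w : ℕ → E} {I : Set ℕ} {B : ℝ}
    (hx : IsBesselOn x I B) (hB : 0 < B) {h : E}
    (hw : Summable (fun n : I => ‖⟪w n, h⟫_ℂ‖ ^ 2))
    (hrec : HasSum (fun n : I => ⟪x n, h⟫_ℂ • w n) h) :
    B⁻¹ * ‖h‖ ^ 2 ≤ ∑' n : I, ‖⟪w n, h⟫_ℂ‖ ^ 2 := by
  obtain ⟨hxs, hxB⟩ := hx h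
  set Sx := ∑' n : I, ‖⟪x n, h⟫_ℂ‖ ^ 2
  set Sw := ∑' n : I, ‖⟪w n, h⟫_ℂ‖ ^ 2
  obtain ⟨hprod, hcs⟩ := Real.summable_and_inner_le_Lp_mul_Lq_tsum_of_nonneg
    Real.HolderConjugate.two_two (f := fun n : I => ‖⟪x n, h⟫_ℂ‖)
    (g := fun n : I => ‖⟪w n, h⟫_ℂ‖) (fun _ => norm_nonneg _) (fun _ => norm_nonneg _)
    (by simpa only [Real.rpow_two] using hxs) (by simpa only [Real.rpow_two] using hw)
  simp only [Real.rpow_two, ← Real.sqrt_eq_rpow] at hcs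
  have hnorm : ∀ n : I, ‖⟪h, ⟪x n, h⟫_ℂ • w n⟫_ℂ‖ = ‖⟪x n, h⟫_ℂ‖ * ‖⟪w n, h⟫_ℂ‖ := fun n => by
    rw [inner_smul_right, norm_mul, norm_inner_symm h (w n)]
  have hh : ‖h‖ ^ 2 ≤ √Sx * √Sw := by
    have hinner := (hrec.mapL (innerSL ℂ h)).tsum_eq
    simp only [innerSL_apply_apply, inner_self_eq_norm_sq_to_K] at hinner
    calc ‖h‖ ^ 2 = ‖∑' n : I, ⟪h, ⟪x n, h⟫_ℂ • w n⟫_ℂ‖ := by rw [hinner]; norm_cast; simp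
      _ ≤ ∑' n : I, ‖⟪x n, h⟫_ℂ‖ * ‖⟪w n, h⟫_ℂ‖ := by
        simpa only [hnorm] using norm_tsum_le_tsum_norm
          (f := fun n : I => ⟪h, ⟪x n, h⟫_ℂ • w n⟫_ℂ) (by simpa only [hnorm] using hprod)
      _ ≤ √Sx * √Sw := hcs
  have hSx : 0 ≤ Sx := tsum_nonneg fun _ => by positivity
  have hSw : 0 ≤ Sw := tsum_nonneg fun _ => by positivity
  have hsq : (‖h‖ ^ 2) ^ 2 ≤ B * ‖h‖ ^ 2 * Sw := by
    calc (‖h‖ ^ 2) ^ 2 ≤ (√Sx * √Sw) ^ 2 := by gcongr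
      _ = Sx * Sw := by rw [mul_pow, Real.sq_sqrt hSx, Real.sq_sqrt hSw]
      _ ≤ B * ‖h‖ ^ 2 * Sw := by gcongr
  rw [inv_mul_le_iff₀ hB]
  nlinarith [mul_nonneg hB.le hSw]

lemma isDualFrameOn_of_isBesselOn {x w : ℕ → E} {I : Set ℕ} {B B' : ℝ}
    (hx : IsBesselOn x I B) (hB : 0 < B) (hw : IsBesselOn w I B')
    (hrec : ∀ h : E, HasSum (fun n : I => ⟪x n, h⟫_ℂ • w n) h) : IsDualFrameOn w x I := by
  refine ⟨⟨B⁻¹, max B' 1, ?_⟩, hrec⟩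
  refine ⟨inv_pos.2 hB, lt_max_of_lt_right one_pos, fun h => ?_⟩
  obtain ⟨hs, hle⟩ := hw h
  exact ⟨hs, hx.inv_mul_sq_norm_le_tsum hB hs (hrec h),
    hle.trans (by gcongr; exact le_max_left _ _)⟩

lemma IsDualFrameOn.hasSum_diff {z x : ℕ → E} {I : Set ℕ} (hz : IsDualFrameOn z x I)
    {s : Finset ℕ} (hs : (s : Set ℕ) ⊆ I) (h : E) :
    HasSum (fun n : (I \ s : Set ℕ) => ⟪x n, h⟫_ℂ • z n) (h - ∑ m ∈ s, ⟪x m, h⟫_ℂ • z m) := by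
  set f : ℕ → E := fun n => ⟪x n, h⟫_ℂ • z n
  have hI : HasSum (I.indicator f) h := hasSum_subtype_iff_indicator.1 (hz.2 h)
  have hs' : HasSum ((s : Set ℕ).indicator f) (∑ m ∈ s, f m) :=
    hasSum_subtype_iff_indicator.1 (s.hasSum f)
  refine (hasSum_subtype_iff_indicator (f := f)).2 ?_
  rw [Set.indicator_sdiff hs]
  exact hI.sub hs'

end Bessel

section Iteration

variable {E : Type*} [NormedAddCommGroup E] [InnerProductSpace ℂ E]

lemma eq_sum_smul_of_eq_inner_smul_add_sum {ι : Type*} {s : Finset ι} {c : ι → ℂ}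
    {y p u : E} {q q' : ι → E} (ht : ⟪y, p⟫_ℂ ≠ 1)
    (hq' : ∀ m ∈ s, q' m = q m + (⟪y, q m⟫_ℂ / (1 - ⟪y, p⟫_ℂ)) • p)
    (hu : u = ⟪y, u⟫_ℂ • p + ∑ m ∈ s, c m • q m) :
    u = ∑ m ∈ s, c m • q' m := by
  have hsub : (1 : ℂ) - ⟪y, p⟫_ℂ ≠ 0 := sub_ne_zero.2 ht.symm
  have hyu : ⟪y, u⟫_ℂ * (1 - ⟪y, p⟫_ℂ) = ∑ m ∈ s, c m * ⟪y, q m⟫_ℂ := by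
    have := congrArg (inner ℂ y) hu
    simp only [inner_add_right, inner_smul_right, inner_sum] at this
    linear_combination this
  have hcoef : ∑ m ∈ s, c m * (⟪y, q m⟫_ℂ / (1 - ⟪y, p⟫_ℂ)) = ⟪y, u⟫_ℂ := by
    simp only [← mul_div_assoc, ← sum_div, ← hyu, mul_div_cancel_right₀ _ hsub]
  calc u = ⟪y, u⟫_ℂ • p + ∑ m ∈ s, c m • q m := hu
    _ = ∑ m ∈ s, c m • q' m := by
      rw [← hcoef, sum_smul, add_comm, ← sum_add_distrib]
      refine sum_congr rfl fun m hm => ?_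
      rw [hq' m hm, smul_add, smul_smul]

lemma eq_zero_of_eq_sum_inner_smul {x : ℕ → E} {v : ℕ → ℕ → E} {k : ℕ}
    (hden : ∀ j ∈ Icc 1 k, ⟪x j, v (j - 1) j⟫_ℂ ≠ 1)
    (hrec : ∀ j ∈ Icc 1 k, ∀ n ∈ Icc (j + 1) k, v j n =
      v (j - 1) n + (⟪x j, v (j - 1) n⟫_ℂ / (1 - ⟪x j, v (j - 1) j⟫_ℂ)) • v (j - 1) j)
    {u : E} (hu : u = ∑ m ∈ Icc 1 k, ⟪x m, u⟫_ℂ • v 0 m) : u = 0 := by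
  have key : ∀ j ≤ k, u = ∑ m ∈ Icc (j + 1) k, ⟪x m, u⟫_ℂ • v j m := by
    intro j hj
    induction j with
    | zero => exact hu
    | succ j ih =>
      have hj1 : j + 1 ∈ Icc 1 k := mem_Icc.2 ⟨j.succ_pos, hj⟩
      have hsplit := ih (by omega)
      rw [← insert_Icc_add_one_left_eq_Icc hj, sum_insert (by simp)] at hsplit
      exact eq_sum_smul_of_eq_inner_smul_add_sum (hden _ hj1) (hrec _ hj1) hsplit
  simpa using key k le_rfl

/-- The analysis operator of `x 1, …, x k`, indexed by `Fin k`. -/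
def finAnalysis (x : ℕ → E) (k : ℕ) : E →L[ℂ] (Fin k → ℂ) :=
  ContinuousLinearMap.pi fun m => innerSL ℂ (x (m + 1))

/-- The synthesis operator of `z 1, …, z k`, indexed by `Fin k`. -/
def finSynthesis (z : ℕ → E) (k : ℕ) : (Fin k → ℂ) →L[ℂ] E :=
  LinearMap.toContinuousLinearMap (Fintype.linearCombination ℂ fun i : Fin k => z (i + 1))

@[simp]
lemma finAnalysis_apply (x : ℕ → E) (k : ℕ) (y : E) :
    finAnalysis x k y = fun m : Fin k => ⟪x (m + 1), y⟫_ℂ :=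
  rfl

@[simp]
lemma finSynthesis_apply (z : ℕ → E) (k : ℕ) (c : Fin k → ℂ) :
    finSynthesis z k c = ∑ i, c i • z (i + 1) :=
  Fintype.linearCombination_apply ℂ _ c

lemma finSynthesis_finAnalysis (x z : ℕ → E) (k : ℕ) (y : E) :
    finSynthesis z k (finAnalysis x k y) = ∑ m ∈ Icc 1 k, ⟪x m, y⟫_ℂ • z m := by
  simp [sum_Icc_one_eq_sum_fin]

lemma mulVec_eq_finAnalysis_finSynthesis_sub {x z : ℕ → E} {k : ℕ}
    {M : Matrix (Fin k) (Fin k) ℂ}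
    (hM : ∀ m i : Fin k, M m i = ⟪x (m + 1), z (i + 1)⟫_ℂ - if m = i then 1 else 0)
    (c : Fin k → ℂ) : M *ᵥ c = finAnalysis x k (finSynthesis z k c) - c := by
  ext m
  simp [Matrix.mulVec, dotProduct, hM, mul_sub, mul_comm]

lemma isUnit_of_iterative_procedure {x z : ℕ → E} {v : ℕ → ℕ → E} {k : ℕ}
    {M : Matrix (Fin k) (Fin k) ℂ} (hv0 : ∀ n, v 0 n = z n)
    (hden : ∀ j ∈ Icc 1 k, ⟪x j, v (j - 1) j⟫_ℂ ≠ 1)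
    (hrec : ∀ j ∈ Icc 1 k, ∀ n ∈ Icc (j + 1) k, v j n =
      v (j - 1) n + (⟪x j, v (j - 1) n⟫_ℂ / (1 - ⟪x j, v (j - 1) j⟫_ℂ)) • v (j - 1) j)
    (hM : ∀ m i : Fin k, M m i = ⟪x (m + 1), z (i + 1)⟫_ℂ - if m = i then 1 else 0) :
    IsUnit M := by
  rw [Matrix.isUnit_iff_isUnit_det, isUnit_iff_ne_zero]
  intro hdet
  obtain ⟨c, hc, hMc⟩ := Matrix.exists_mulVec_eq_zero_iff.2 hdet
  have hXZ : finAnalysis x k (finSynthesis z k c) = c := by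
    rw [← sub_eq_zero, ← mulVec_eq_finAnalysis_finSynthesis_sub hM, hMc]
  have hu : finSynthesis z k c = 0 := by
    refine eq_zero_of_eq_sum_inner_smul hden hrec ?_
    conv_lhs => rw [← hXZ, finSynthesis_finAnalysis]
    simp only [hv0]
  exact hc (by rw [← hXZ, hu, map_zero])

end Iteration

lemma leftInverse_one_sub_comp_comp {R V W : Type*} [Semiring R] [AddCommGroup V] [Module R V]
    [AddCommGroup W] [Module R W] {X : V →ₗ[R] W} {Z : W →ₗ[R] V} {N : W →ₗ[R] W}
    (hN : Function.LeftInverse ⇑N ⇑(X ∘ₗ Z - 1)) :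
    Function.LeftInverse ⇑(1 - Z ∘ₗ N ∘ₗ X) ⇑(1 - Z ∘ₗ X) := by
  intro y
  have hNX : N (X ((1 - Z ∘ₗ X) y)) = -X y := by
    rw [← hN (-X y)]
    simp only [LinearMap.sub_apply, LinearMap.comp_apply, Module.End.one_apply, map_neg,
      map_sub, neg_sub]
  simp only [LinearMap.sub_apply, LinearMap.comp_apply, Module.End.one_apply] at hNX ⊢
  rw [hNX, map_neg, sub_neg_eq_add, sub_add_cancel]

theorem stmt12_general (x z : ℕ → H) (I : Set ℕ) (A B : ℝ) (hx : IsFrameOn x I A B)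
    (hz : IsDualFrameOn z x I) (k : ℕ)
    (hE : ((Finset.Icc 1 k : Finset ℕ) : Set ℕ) ⊂ I)
    (v : ℕ → ℕ → H) (hv0 : ∀ n, v 0 n = z n)
    (hden : ∀ j ∈ Finset.Icc 1 k, (inner ℂ (x j) (v (j - 1) j) : ℂ) ≠ 1)
    (hrec : ∀ j ∈ Finset.Icc 1 k, ∀ n ∈ I \ ((Finset.Icc 1 j : Finset ℕ) : Set ℕ),
      v j n = v (j - 1) n +
        ((inner ℂ (x j) (v (j - 1) n) : ℂ) / (1 - (inner ℂ (x j) (v (j - 1) j) : ℂ))) •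
          v (j - 1) j)
    (M : Matrix (Fin k) (Fin k) ℂ)
    (hM : ∀ m i : Fin k,
      M m i = (inner ℂ (x ((m : ℕ) + 1)) (z ((i : ℕ) + 1)) : ℂ) - if m = i then 1 else 0)
    (α : ℕ → Fin k → ℂ)
    (hα : ∀ n : ℕ,
      α n = Matrix.mulVec M⁻¹ (fun m : Fin k => (inner ℂ (x ((m : ℕ) + 1)) (z n) : ℂ))) :
    IsUnit M ∧
    IsDualFrameOn (fun n => z n - ∑ i : Fin k, α n i • z ((i : ℕ) + 1)) x
      (I \ ((Finset.Icc 1 k : Finset ℕ) : Set ℕ)) := by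
  have hEI : ((Icc 1 k : Finset ℕ) : Set ℕ) ⊆ I := hE.subset
  have hunit : IsUnit M := by
    refine isUnit_of_iterative_procedure hv0 hden (fun j hj n hn => hrec j hj n ⟨hEI ?_, ?_⟩) hM
      <;> simp only [mem_Icc, coe_Icc, Set.mem_Icc] at hj hn ⊢ <;> omega
  set X := finAnalysis x k
  set Z := finSynthesis z k
  set N := (Matrix.toLin' M⁻¹).toContinuousLinearMap
  set T : H →L[ℂ] H := 1 - Z ∘L N ∘L X
  have hw : ∀ n, z n - ∑ i : Fin k, α n i • z ((i : ℕ) + 1) = T (z n) := fun n => by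
    simp [T, N, X, Z, hα]
  have hT : ∀ y, T (y - Z (X y)) = y := by
    have hN : ∀ c, N (X (Z c) - c) = c := fun c => by
      rw [← mulVec_eq_finAnalysis_finSynthesis_sub hM]
      simp [N, Matrix.mulVec_mulVec, Matrix.nonsing_inv_mul M (M.isUnit_iff_isUnit_det.1 hunit)]
    intro y
    simpa [T] using leftInverse_one_sub_comp_comp (X := X.toLinearMap) (Z := Z.toLinearMap)
      (N := N.toLinearMap) (by simpa [Function.LeftInverse] using hN) y
  obtain ⟨Az, Bz, hzf⟩ := hz.1
  refine ⟨hunit, ?_⟩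
  simp only [hw]
  refine isDualFrameOn_of_isBesselOn (hx.isBesselOn.mono Set.sdiff_subset) hx.2.1
    ((hzf.isBesselOn.map hzf.2.1.le T).mono Set.sdiff_subset) fun h => ?_
  have hsum := (hz.hasSum_diff hEI h).mapL T
  rw [← finSynthesis_finAnalysis, hT] at hsum
  simpa only [map_smul] using hsum

/-- If the iterative procedure starting from a dual frame `z` is well defined through
step `k`, then the `k×k` matrix `A_{X,Z,E}` with entries `⟨z i, x m⟩ − δ_{m i}` is
invertible and `v n = z n − Σ_{i=1}^k α_{n i} z i` with
`(α_{n 1},…,α_{n k})ᵀ = A_{X,Z,E}⁻¹ (⟨z n, x 1⟩,…,⟨z n, x k⟩)ᵀ` is a dual frame of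
`(x n)_{n ∈ I \ E}`, where `E = {1,…,k}`. -/
theorem stmt12 (x z : ℕ → H) (I : Set ℕ) (A B : ℝ) (hx : IsFrameOn x I A B)
    (hz : IsDualFrameOn z x I) (k : ℕ)
    (hE : ((Finset.Icc 1 k : Finset ℕ) : Set ℕ) ⊂ I)
    (hMRC : Dense ((Submodule.span ℂ
      (x '' (I \ (Finset.Icc 1 k : Finset ℕ))) : Submodule ℂ H) : Set H))
    (v : ℕ → ℕ → H) (hv0 : ∀ n, v 0 n = z n)
    (hden : ∀ j ∈ Finset.Icc 1 k, (inner ℂ (x j) (v (j - 1) j) : ℂ) ≠ 1)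
    (hrec : ∀ j ∈ Finset.Icc 1 k, ∀ n ∈ I \ ((Finset.Icc 1 j : Finset ℕ) : Set ℕ),
      v j n = v (j - 1) n +
        ((inner ℂ (x j) (v (j - 1) n) : ℂ) / (1 - (inner ℂ (x j) (v (j - 1) j) : ℂ))) •
          v (j - 1) j)
    (M : Matrix (Fin k) (Fin k) ℂ)
    (hM : ∀ m i : Fin k,
      M m i = (inner ℂ (x ((m : ℕ) + 1)) (z ((i : ℕ) + 1)) : ℂ) - if m = i then 1 else 0)
    (α : ℕ → Fin k → ℂ)
    (hα : ∀ n : ℕ,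
      α n = Matrix.mulVec M⁻¹ (fun m : Fin k => (inner ℂ (x ((m : ℕ) + 1)) (z n) : ℂ))) :
    IsUnit M ∧
    IsDualFrameOn (fun n => z n - ∑ i : Fin k, α n i • z ((i : ℕ) + 1)) x
      (I \ ((Finset.Icc 1 k : Finset ℕ) : Set ℕ)) :=
  stmt12_general x z I A B hx hz k hE v hv0 hden hrec M hM α hα

end
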